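/- arXiv:2303.00906 — 2 statements merged into one kernel-verified Lean document; each statement's English description precedes it below -/
import Mathlib

section
/- Let det : (ℤ × ℤ) → (ℤ × ℤ) → ℤ be the determinant pairing det((a,b),(c,e)) = a·e − b·c. Suppose x, d ∈ ℤ × ℤ satisfy |det(x, d)| = 1. Then a class y ∈ ℤ × ℤ satisfies both |det(y, d)| = 1 and |det(x, y)| = 1 if and only if y ∈ {x + d, x − d, −x + d, −x − d}. (This is the step in the classification of genus-1 multisections with divides showing that a cut curve intersecting both the dividing set d and the previous cut curve exactly once must be obtained from the previous cut curve by a single Dehn twist about d.) -/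
/-- The standard determinant pairing on `ℤ × ℤ`, i.e. the algebraic intersection
number of simple closed curves on the torus `T²` via `H₁(T²;ℤ) ≅ ℤ × ℤ`. -/
def detZ (p q : ℤ × ℤ) : ℤ := p.1 * q.2 - p.2 * q.1

/-- If `|det(x,d)| = 1`, then `y` satisfies `|det(y,d)| = 1` and `|det(x,y)| = 1`
iff `y ∈ {x + d, x - d, -x + d, -x - d}`: the next cut curve is obtained from
the previous one by a single Dehn twist about the dividing set `d`. -/
theorem dehn_twist_step (x d : ℤ × ℤ) (hxd : |detZ x d| = 1) (y : ℤ × ℤ) :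
    (|detZ y d| = 1 ∧ |detZ x y| = 1) ↔
      (y = x + d ∨ y = x - d ∨ y = -x + d ∨ y = -x - d) := by
  constructor
  · rintro ⟨hyd, hxy⟩
    have h1 : detZ x d * y.1 = detZ y d * x.1 + detZ x y * d.1 := by
      simp only [detZ]; ring
    have h2 : detZ x d * y.2 = detZ y d * x.2 + detZ x y * d.2 := by
      simp only [detZ]; ring
    rcases (abs_eq (by norm_num)).mp hxd with hD | hD <;>
      rcases (abs_eq (by norm_num)).mp hyd with hA | hA <;>
        rcases (abs_eq (by norm_num)).mp hxy with hB | hB <;>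
          rw [hD, hA, hB] at h1 h2 <;>
            simp only [Prod.ext_iff, Prod.fst_add, Prod.snd_add, Prod.fst_sub,
              Prod.snd_sub, Prod.fst_neg, Prod.snd_neg] <;> omega
  · rw [abs_eq (by norm_num : (0:ℤ) ≤ 1)] at hxd
    rintro (rfl | rfl | rfl | rfl) <;> constructor <;>
      rw [abs_eq (by norm_num : (0:ℤ) ≤ 1)] <;>
        simp only [detZ, Prod.fst_add, Prod.snd_add, Prod.fst_sub, Prod.snd_sub,
          Prod.fst_neg, Prod.snd_neg] at hxd ⊢ <;>
          rcases hxd with h | h <;>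
            first
              | (left; linear_combination h)
              | (right; linear_combination h)
              | (left; linear_combination -h)
              | (right; linear_combination -h)
end

section
/- Let det((a,b),(c,e)) = a·e − b·c, let d = (1,−1) ∈ ℤ × ℤ, and let T(x) = x + det(d, x)·d be the transvection about d (the homological action of the right-handed Dehn twist about the dividing-set slope in the unique genus-1 multisection with divides). Define the sequence α_i = T^{i−1}((0,1)) for i ≥ 1 (so α₁ = (0,1), α₂ = (1,0)). Then for all i, j ≥ 1 one has det(α_i, α_j) = i − j. In particular, consecutive cut curves satisfy det(α_i, α_{i+1}) = −1 (they intersect once, so the cut systems form a genus-1 multisection diagram), and det(α_i, α_{i+2}) = −2, so every sphere in the corresponding linear plumbing has Euler number −2: the genus-1 n-section with divides is the linear plumbing of n−1 disk bundles over S² each of Euler number −2. -/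
/-- With dividing set `d = (1,-1)`, transvection `T(x) = x + det(d,x)·d`, and
cut curves `α_i = T^{i-1}((0,1))` for `i ≥ 1`, one has
`det(α_i, α_j) = i - j` for all `i, j ≥ 1`; in particular
`det(α_i, α_{i+1}) = -1` (consecutive cut curves intersect once, giving a
genus-1 multisection diagram) and `det(α_i, α_{i+2}) = -2` (each sphere of the
corresponding linear plumbing has Euler number `-2`): the genus-1 n-section
with divides is the linear plumbing of `n-1` disk bundles over `S²` each of
Euler number `-2`. -/
theorem genus_one_multisection_with_divides
    (d : ℤ × ℤ) (hd : d = (1, -1))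
    (T : ℤ × ℤ → ℤ × ℤ) (hT : ∀ x, T x = x + detZ d x • d)
    (α : ℕ → ℤ × ℤ) (hα : ∀ i, 1 ≤ i → α i = T^[i - 1] (0, 1)) :
    (∀ i j, 1 ≤ i → 1 ≤ j → detZ (α i) (α j) = (i : ℤ) - (j : ℤ)) ∧
    (∀ i, 1 ≤ i → detZ (α i) (α (i + 1)) = -1) ∧
    (∀ i, 1 ≤ i → detZ (α i) (α (i + 2)) = -2) := by
  subst hd
  have key : ∀ n : ℕ, T^[n] (0, 1) = ((n : ℤ), 1 - (n : ℤ)) := by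
    intro n
    induction n with
    | zero => simp
    | succ n ih =>
      rw [Function.iterate_succ_apply', ih, hT]
      simp [detZ, Prod.ext_iff]
      ring
  have main : ∀ i j, 1 ≤ i → 1 ≤ j → detZ (α i) (α j) = (i : ℤ) - (j : ℤ) := by
    intro i j hi hj
    rw [hα i hi, hα j hj, key, key, detZ]
    have hi' : ((i - 1 : ℕ) : ℤ) = (i : ℤ) - 1 := by
      push_cast [Nat.cast_sub hi]; ring
    have hj' : ((j - 1 : ℕ) : ℤ) = (j : ℤ) - 1 := by
      push_cast [Nat.cast_sub hj]; ring
    rw [hi', hj']; ring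
  refine ⟨main, fun i hi => ?_, fun i hi => ?_⟩
  · rw [main i (i + 1) hi (by omega)]; push_cast; ring
  · rw [main i (i + 2) hi (by omega)]; push_cast; ring
end
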